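/- arXiv:2504.16668 — 2 statements merged into one kernel-verified Lean document; each statement's English description precedes it below -/
import Mathlib

section
/- For any player i, the marginal-contribution Shapley value equals the complementary-contribution Shapley value; that is, for a cooperative game (N, U) with |N| = n, the sum over S ⊆ N\{i} of (U(S ∪ {i}) − U(S)) / (n · C(n−1, |S|)) equals the sum over S ⊆ N\{i} of (U(S ∪ {i}) − U(N \ (S ∪ {i}))) / (n · C(n−1, |S|)). -/
open Finset

theorem mc_eq_cc_shapley {α : Type*} [DecidableEq α] (N : Finset α) (U : Finset α → ℝ)
    (i : α) (hi : i ∈ N) :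
    ∑ S ∈ (N.erase i).powerset,
        (U (insert i S) - U S) / (N.card * (N.card - 1).choose S.card) =
    ∑ S ∈ (N.erase i).powerset,
        (U (insert i S) - U (N \ insert i S)) / (N.card * (N.card - 1).choose S.card) := by
  simp only [sub_div]
  rw [Finset.sum_sub_distrib, Finset.sum_sub_distrib]
  congr 1
  refine Finset.sum_nbij' (fun S => (N.erase i) \ S) (fun S => (N.erase i) \ S)
    (fun S hS => ?_) (fun S hS => ?_) (fun S hS => ?_) (fun S hS => ?_) (fun S hS => ?_)
  · exact mem_powerset.2 (sdiff_subset)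
  · exact mem_powerset.2 (sdiff_subset)
  · exact Finset.sdiff_sdiff_eq_self (mem_powerset.1 hS)
  · exact Finset.sdiff_sdiff_eq_self (mem_powerset.1 hS)
  · have hS' : S ⊆ N.erase i := mem_powerset.1 hS
    have h1 : N \ insert i ((N.erase i) \ S) = S := by
      rw [← Finset.sdiff_sdiff_eq_self hS']
      ext x
      simp only [mem_sdiff, mem_insert, mem_erase]
      tauto
    have hcard : ((N.erase i) \ S).card = (N.erase i).card - S.card :=
      card_sdiff_of_subset hS'
    have hle : S.card ≤ N.card - 1 := by
      have := card_le_card hS'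
      rwa [card_erase_of_mem hi] at this
    rw [h1, hcard, card_erase_of_mem hi, Nat.choose_symm hle]
end

section
/- In the FL linear regression model with mse(d) = μ|x|/(d − |x| − 1), U(∅) = −m₀, U(S) = −mse(t|S|), and assuming m₀ ≥ mse(|x|+2) = μ|x|, the relative error of the truncated Shapley value satisfies |φ_i^{k*} − φ_i| / φ_i ≤ (n − k*) t / ((k* t − |x| − 1)(n t − |x| − 2)), where φ_i^{k*} uses only subsets of size < k*. -/
theorem ipss_relative_error (n t x k : ℕ) (μ m₀ : ℝ) (hμ : 0 < μ)
    (hk : 1 ≤ k) (hkn : k ≤ n) (ht : x + 1 < t)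
    (hm₀ : μ * x ≤ m₀)
    (hφ : 0 < (1 / n : ℝ) * (m₀ - μ * x / ((n : ℝ) * t - x - 1))) :
    |(1 / n : ℝ) * (m₀ - μ * x / ((k : ℝ) * t - x - 1)) -
        (1 / n : ℝ) * (m₀ - μ * x / ((n : ℝ) * t - x - 1))| /
      ((1 / n : ℝ) * (m₀ - μ * x / ((n : ℝ) * t - x - 1)))
    ≤ ((n : ℝ) - k) * t / (((k : ℝ) * t - x - 1) * ((n : ℝ) * t - x - 2)) := by
  rcases eq_or_lt_of_le hkn with h | h
  · subst h
    simp
  · -- k < n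
    have hkR : (1 : ℝ) ≤ (k : ℝ) := by exact_mod_cast hk
    have hknR : (k : ℝ) + 1 ≤ (n : ℝ) := by exact_mod_cast h
    have htR : (x : ℝ) + 1 + 1 ≤ (t : ℝ) := by exact_mod_cast ht
    have hx : (0 : ℝ) ≤ (x : ℝ) := Nat.cast_nonneg x
    have hn : (0 : ℝ) < (n : ℝ) := by linarith
    have hA : (0 : ℝ) < (k : ℝ) * t - x - 1 := by nlinarith
    have hB : (0 : ℝ) < (n : ℝ) * t - x - 1 := by nlinarith
    have hC : (0 : ℝ) < (n : ℝ) * t - x - 2 := by nlinarith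
    have hAB : (k : ℝ) * t - x - 1 ≤ (n : ℝ) * t - x - 1 := by nlinarith
    have hμx : (0 : ℝ) ≤ μ * x := by positivity
    have hdiff : (1 / n : ℝ) * (m₀ - μ * x / ((k : ℝ) * t - x - 1)) -
        (1 / n : ℝ) * (m₀ - μ * x / ((n : ℝ) * t - x - 1)) ≤ 0 := by
      have : μ * x / ((n : ℝ) * t - x - 1) ≤ μ * x / ((k : ℝ) * t - x - 1) :=
        div_le_div_of_nonneg_left hμx hA hAB |>.trans_eq rfl
      have h1 : (0 : ℝ) ≤ 1 / (n : ℝ) := by positivity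
      nlinarith
    rw [abs_of_nonpos hdiff, div_le_div_iff₀ hφ (by positivity)]
    have hnz : (n : ℝ) ≠ 0 := ne_of_gt hn
    have hAz : ((k : ℝ) * t - x - 1) ≠ 0 := ne_of_gt hA
    have hBz : ((n : ℝ) * t - x - 1) ≠ 0 := ne_of_gt hB
    have key : μ * x * ((n : ℝ) * t - x - 2) ≤ m₀ * ((n : ℝ) * t - x - 1) - μ * x := by
      nlinarith
    have e1 : -((1 / n : ℝ) * (m₀ - μ * x / ((k : ℝ) * t - x - 1)) -
        (1 / n : ℝ) * (m₀ - μ * x / ((n : ℝ) * t - x - 1))) *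
        (((k : ℝ) * t - x - 1) * ((n : ℝ) * t - x - 2)) =
        (((n : ℝ) - k) * t / n) * (μ * x * ((n : ℝ) * t - x - 2) / ((n : ℝ) * t - x - 1)) := by
      field_simp
      ring
    have e2 : ((n : ℝ) - k) * t * ((1 / n : ℝ) * (m₀ - μ * x / ((n : ℝ) * t - x - 1))) =
        (((n : ℝ) - k) * t / n) * (m₀ - μ * x / ((n : ℝ) * t - x - 1)) := by ring
    rw [e1, e2]
    apply mul_le_mul_of_nonneg_left _ (div_nonneg (mul_nonneg (by linarith) (Nat.cast_nonneg t)) hn.le)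
    have h4 : μ * x * ((n : ℝ) * t - x - 2) / ((n : ℝ) * t - x - 1)
        + μ * x / ((n : ℝ) * t - x - 1) ≤ m₀ := by
      rw [← add_div, div_le_iff₀ hB]
      linarith
    linarith [h4]
end
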